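/- arXiv:1811.08505 — 2 statements merged into one kernel-verified Lean document; each statement's English description precedes it below -/
import Mathlib

section
/- For d ≥ 3 and every i with 0 ≤ i and 2i ≤ d+1, the simplicial complex ⋃_{k=0}^{i} Γ_k is shellable; in fact the ordering τ_0, τ_1^1, …, τ_1^d, τ_2^1, …, τ_2^d, …, τ_i^1, …, τ_i^d of its facets (by increasing j, then increasing k) is a shelling order. -/
/-!
Write `τ_j^k` as the facet whose `y`-vertices form the cyclic block of length `j` starting at
`k`. A face `G ⊆ τ_{j+1}^k` that misses the end `y_k` of the block lies in `τ_j^{k+1}`, and one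
that misses the other end `y_{k+j}` lies in `τ_j^k`; both come earlier in the order. Conversely,
an earlier facet `τ_{j'}^{k'}` (so `j' ≤ j + 1`) containing both ends has a `y`-block of length
`j' ≤ j + 1` covering the `j + 1` positions from `k` to `k + j`: since `2i ≤ d + 1` the two ends
cannot be reached by wrapping around, so `j' = j + 1` and `k' = k`, i.e. it is the same facet.
Hence `{y_k, y_{k+j}}` is the restriction face of `τ_{j+1}^k`.
-/

namespace SpherePaper

/-- Vertices of `∂C_d^*`: `(i, false)` plays the role of `x_i` and `(i, true)` of `y_i`,
with the cyclic index convention `x_{d+k} = x_k` built in via `ZMod d`. -/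
abbrev Vtx (d : ℕ) := ZMod d × Bool

/-- The vertex `x_k`. -/
def xv (d k : ℕ) : Vtx d := ((k : ZMod d), false)

/-- The vertex `y_k`. -/
def yv (d k : ℕ) : Vtx d := ((k : ZMod d), true)

/-- The antipodal map `α`, sending `x_k ↦ y_k` and `y_k ↦ x_k`. -/
def alphaV (d : ℕ) (v : Vtx d) : Vtx d := (v.1, !v.2)

/-- The facet `τ_j^k = {y_k, …, y_{k+j-1}} ∪ {x_{k+j}, …, x_{k+d-1}}` of `∂C_d^*`. -/
def tau (d j k : ℕ) : Finset (Vtx d) :=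
  (Finset.range d).image fun t => (((k + t : ℕ) : ZMod d), decide (t < j))

/-- The complex `Γ_j` generated by the facets `τ_j^k`, `1 ≤ k ≤ d`. -/
def Gamma (d j : ℕ) : Set (Finset (Vtx d)) :=
  {F | ∃ k, 1 ≤ k ∧ k ≤ d ∧ F ⊆ tau d j k}

/-- The `n`-th facet `σ_n` of `B(1,d)` (indices read periodically mod `2d`):
`σ_i = {x_1,…,x_i, y_{i+1},…,y_d}` and `σ_{d+i} = {y_1,…,y_i, x_{i+1},…,x_d}`
for `1 ≤ i ≤ d`. -/
def sigB (d n : ℕ) : Finset (Vtx d) :=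
  if (n - 1) % (2 * d) + 1 ≤ d then
    (Finset.range d).image fun t =>
      (((t + 1 : ℕ) : ZMod d), decide ((n - 1) % (2 * d) + 1 < t + 1))
  else
    (Finset.range d).image fun t =>
      (((t + 1 : ℕ) : ZMod d), decide (t + 1 ≤ (n - 1) % (2 * d) + 1 - d))

/-- `F` is a facet (an inclusion-maximal face) of the complex `C`. -/
def IsFacetOf {α : Type*} (C : Set (Finset α)) (F : Finset α) : Prop :=
  F ∈ C ∧ ∀ G ∈ C, F ⊆ G → F = G

end SpherePaper

theorem ZMod.val_add_natCast {d : ℕ} {x : ZMod d} {m : ℕ} (h : x.val + m < d) :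
    (x + m).val = x.val + m := by
  rw [ZMod.val_add_of_lt] <;> rw [ZMod.val_natCast_of_lt (by omega)]
  exact h

theorem ZMod.val_sub_natCast {d : ℕ} [NeZero d] {x : ZMod d} {m : ℕ} (h : m ≤ x.val) :
    (x - m).val = x.val - m := by
  have := x.val_lt
  rw [ZMod.val_sub] <;> rw [ZMod.val_natCast_of_lt (by omega)]
  exact h

namespace SpherePaper

section Tau

variable {d : ℕ}

lemma tau_congr {j k k' : ℕ} (h : (k : ZMod d) = k') : tau d j k = tau d j k' := by
  simp only [tau, Nat.cast_add, h]

variable [NeZero d]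

lemma mem_tau {j k : ℕ} {v : Vtx d} :
    v ∈ tau d j k ↔ v.2 = decide ((v.1 - k).val < j) := by
  constructor
  · simp only [tau, Finset.mem_image, Finset.mem_range]
    rintro ⟨t, ht, rfl⟩
    simp [ZMod.val_natCast_of_lt ht]
  · intro hv
    simp only [tau, Finset.mem_image, Finset.mem_range]
    refine ⟨(v.1 - k).val, ZMod.val_lt _, Prod.ext ?_ hv.symm⟩
    push_cast
    rw [ZMod.natCast_zmod_val]
    ring

lemma yv_mem_tau {j k m : ℕ} : yv d m ∈ tau d j k ↔ ((m : ZMod d) - k).val < j := by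
  simp [mem_tau, yv]

lemma yv_add_mem_tau {j k m : ℕ} (hmj : m < j) (hmd : m < d) : yv d (k + m) ∈ tau d j k := by
  rw [yv_mem_tau, Nat.cast_add, add_sub_cancel_left, ZMod.val_natCast_of_lt hmd]
  exact hmj

lemma tau_zero (k k' : ℕ) : tau d 0 k = tau d 0 k' := by
  ext v
  simp [mem_tau]

lemma tau_erase_yv_subset_succ (j k : ℕ) :
    (tau d (j + 1) k).erase (yv d k) ⊆ tau d j (k + 1) := by
  intro v hv
  obtain ⟨hne, hv⟩ := Finset.mem_erase.1 hv
  rw [mem_tau] at hv ⊢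
  have hpos : (v.1 - k).val ≠ 0 := by
    intro h0
    exact hne (Prod.ext (sub_eq_zero.1 ((ZMod.val_eq_zero _).1 h0)) (by simpa [h0, yv] using hv))
  have hshift : v.1 - ((k + 1 : ℕ) : ZMod d) = (v.1 - k) - ((1 : ℕ) : ZMod d) := by
    push_cast; ring
  rw [hshift, ZMod.val_sub_natCast (by omega), hv]
  exact decide_eq_decide.2 (by omega)

lemma tau_erase_yv_subset (j k : ℕ) :
    (tau d (j + 1) k).erase (yv d (k + j)) ⊆ tau d j k := by
  intro v hv
  obtain ⟨hne, hv⟩ := Finset.mem_erase.1 hv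
  rw [mem_tau] at hv ⊢
  have hlast : (v.1 - k).val ≠ j := by
    intro hj
    refine hne (Prod.ext ?_ (by simpa [hj, yv] using hv))
    rw [yv, Nat.cast_add, ← hj, ZMod.natCast_zmod_val]
    ring
  rw [hv]
  exact decide_eq_decide.2 (by omega)

lemma eq_of_yv_mem_tau {j j' k k' : ℕ} (hj' : j' ≤ j + 1) (hjd : j + j' ≤ d)
    (h₁ : yv d k ∈ tau d j' k') (h₂ : yv d (k + j) ∈ tau d j' k') :
    j' = j + 1 ∧ (k : ZMod d) = k' := by
  rw [yv_mem_tau] at h₁ h₂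
  have hshift : ((k + j : ℕ) : ZMod d) - k' = ((k : ZMod d) - k') + (j : ℕ) := by
    push_cast; ring
  rw [hshift, ZMod.val_add_natCast (by omega)] at h₂
  refine ⟨by omega, ?_⟩
  have h0 : ((k : ZMod d) - k').val = 0 := by omega
  exact sub_eq_zero.1 ((ZMod.val_eq_zero _).1 h0)

end Tau

/-- The position `(j, k)` of the `n`-th facet `τ_j^k` of the shelling order: `n = (j - 1) d + k`
with `1 ≤ k ≤ d`, while `n = 0` gives `τ_0 = τ_0^d`. -/
def tauJ (d n : ℕ) : ℕ := (n + d - 1) / d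

def tauK (d n : ℕ) : ℕ := (n + d - 1) % d + 1

def tauSeq (d n : ℕ) : Finset (Vtx d) := tau d (tauJ d n) (tauK d n)

section Index

variable {d : ℕ}

lemma one_le_tauK (n : ℕ) : 1 ≤ tauK d n := Nat.le_add_left 1 _

lemma tauJ_mono : Monotone (tauJ d) := fun _ _ h => Nat.div_le_div_right (by omega)

variable [NeZero d]

lemma tauK_le (n : ℕ) : tauK d n ≤ d := Nat.mod_lt _ (NeZero.pos d)

lemma mul_tauJ_add_tauK (n : ℕ) : d * tauJ d n + tauK d n = n + d := by
  have := Nat.div_add_mod (n + d - 1) d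
  have := NeZero.pos d
  unfold tauJ tauK
  omega

lemma tauJ_le_iff {n i : ℕ} : tauJ d n ≤ i ↔ n ≤ i * d := by
  have := NeZero.pos d
  rw [tauJ, Nat.div_le_iff_le_mul_add_pred this, mul_comm]
  omega

lemma tauJ_eq_zero_iff {n : ℕ} : tauJ d n = 0 ↔ n = 0 := by
  rw [← Nat.le_zero, tauJ_le_iff, zero_mul, Nat.le_zero]

lemma tauJ_zero : tauJ d 0 = 0 := tauJ_eq_zero_iff.2 rfl

lemma exists_tauJ_eq_add_one {n : ℕ} (hn : n ≠ 0) : ∃ j, tauJ d n = j + 1 :=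
  Nat.exists_eq_add_one_of_ne_zero (tauJ_eq_zero_iff.not.2 hn)

lemma tauJ_tauK_of_mul_add {n j k : ℕ} (hk : 1 ≤ k) (hkd : k ≤ d) (h : d * j + k = n + d) :
    tauJ d n = j ∧ tauK d n = k := by
  have hdiv : (n + d - 1) / d = j ∧ (n + d - 1) % d = k - 1 :=
    (Nat.div_mod_unique (NeZero.pos d)).2 ⟨by omega, by omega⟩
  exact ⟨hdiv.1, by rw [tauK, hdiv.2]; omega⟩

lemma eq_of_tauJ_eq_of_tauK_eq {a b : ℕ} (hJ : tauJ d a = tauJ d b) (hK : tauK d a = tauK d b) :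
    a = b := by
  have ha := mul_tauJ_add_tauK (d := d) a
  have hb := mul_tauJ_add_tauK (d := d) b
  rw [hJ, hK] at ha
  omega

lemma tauK_eq_of_natCast_eq {a b : ℕ} (h : (tauK d a : ZMod d) = tauK d b) :
    tauK d a = tauK d b := by
  simp only [tauK, Nat.cast_add_one, add_left_inj] at h ⊢
  have hd := NeZero.pos d
  rw [← ZMod.val_natCast_of_lt (Nat.mod_lt (a + d - 1) hd),
    ← ZMod.val_natCast_of_lt (Nat.mod_lt (b + d - 1) hd), h]

lemma exists_tauSeq_eq (j k : ℕ) : ∃ n, tauJ d n = j ∧ tauSeq d n = tau d j k := by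
  rcases j with _ | j
  · exact ⟨0, tauJ_zero, by rw [tauSeq, tauJ_zero, tau_zero]⟩
  have hd := NeZero.pos d
  have hr := Nat.mod_lt (k + (d - 1)) hd
  obtain ⟨hJ, hK⟩ := tauJ_tauK_of_mul_add (n := d * j + ((k + (d - 1)) % d + 1)) (j := j + 1)
    (by omega) hr (by rw [mul_add_one]; omega)
  refine ⟨_, hJ, ?_⟩
  rw [tauSeq, hJ, hK]
  apply tau_congr
  rw [Nat.cast_add_one, ZMod.natCast_mod, ← Nat.cast_add_one, add_assoc,
    Nat.sub_add_cancel hd, Nat.cast_add, ZMod.natCast_self, add_zero]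

lemma tauSeq_generates (i : ℕ) :
    ({G | ∃ j ≤ i, G ∈ Gamma d j} : Set (Finset (Vtx d))) =
      {G | ∃ n ≤ i * d, G ⊆ tauSeq d n} := by
  ext G
  constructor
  · rintro ⟨j, hj, k, -, -, hG⟩
    obtain ⟨n, hnj, hn⟩ := exists_tauSeq_eq (d := d) j k
    exact ⟨n, tauJ_le_iff.1 (hnj ▸ hj), hn ▸ hG⟩
  · rintro ⟨n, hn, hG⟩
    exact ⟨tauJ d n, tauJ_le_iff.2 hn, tauK d n, one_le_tauK n, tauK_le n, hG⟩

lemma eq_of_yv_mem_tauSeq {i a b j : ℕ} (hi : 2 * i ≤ d + 1) (hb : b ≤ i * d)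
    (hab : tauJ d a ≤ tauJ d b) (hbj : tauJ d b = j + 1)
    (h₁ : yv d (tauK d b) ∈ tauSeq d a) (h₂ : yv d (tauK d b + j) ∈ tauSeq d a) : a = b := by
  have := tauJ_le_iff.2 hb
  obtain ⟨hJ, hK⟩ := eq_of_yv_mem_tau (by omega) (by omega) h₁ h₂
  exact eq_of_tauJ_eq_of_tauK_eq (by omega) (tauK_eq_of_natCast_eq hK).symm

lemma yv_ends_mem_tauSeq {i n j : ℕ} (hi : 2 * i ≤ d + 1) (hn : n ≤ i * d)
    (hnj : tauJ d n = j + 1) :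
    yv d (tauK d n) ∈ tauSeq d n ∧ yv d (tauK d n + j) ∈ tauSeq d n := by
  have := tauJ_le_iff.2 hn
  rw [tauSeq, hnj]
  exact ⟨by simpa using yv_add_mem_tau (k := tauK d n) (j := j + 1) (m := 0) (by omega) (by omega),
    yv_add_mem_tau (by omega) (by omega)⟩

lemma tauSeq_injOn {i a b : ℕ} (hi : 2 * i ≤ d + 1) (ha : a ≤ i * d) (hb : b ≤ i * d)
    (hab : tauSeq d a = tauSeq d b) : a = b := by
  wlog hJ : tauJ d a ≤ tauJ d b generalizing a b
  · exact (this hb ha hab.symm (by omega)).symm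
  by_cases hb0 : tauJ d b = 0
  · rw [tauJ_eq_zero_iff.1 hb0, tauJ_eq_zero_iff.1 (by omega : tauJ d a = 0)]
  obtain ⟨j, hj⟩ := Nat.exists_eq_add_one_of_ne_zero hb0
  obtain ⟨h₁, h₂⟩ := yv_ends_mem_tauSeq hi hb hj
  exact eq_of_yv_mem_tauSeq hi hb hJ hj (hab ▸ h₁) (hab ▸ h₂)

lemma tauSeq_shelling {i n : ℕ} (hi : 2 * i ≤ d + 1) (hn1 : 1 ≤ n) (hn : n ≤ i * d) :
    ∃ r ⊆ tauSeq d n, ∀ G : Finset (Vtx d),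
      (G ⊆ tauSeq d n ∧ ∀ l < n, ¬ G ⊆ tauSeq d l) ↔ (r ⊆ G ∧ G ⊆ tauSeq d n) := by
  obtain ⟨j, hj⟩ := exists_tauJ_eq_add_one (d := d) (by omega : n ≠ 0)
  obtain ⟨hk, hkj⟩ := yv_ends_mem_tauSeq hi hn hj
  have hseq : tauSeq d n = tau d (j + 1) (tauK d n) := by rw [tauSeq, hj]
  have mem_of_erase : ∀ G, (∀ l < n, ¬ G ⊆ tauSeq d l) → G ⊆ tauSeq d n →
      ∀ v k', (tau d (j + 1) (tauK d n)).erase v ⊆ tau d j k' → v ∈ G := by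
    intro G hnew hG v k' hsub
    by_contra hv
    obtain ⟨l, hlj, hl⟩ := exists_tauSeq_eq (d := d) j k'
    have hln : l < n := lt_of_not_ge fun h => by have := tauJ_mono (d := d) h; omega
    exact hnew l hln (hl ▸ (Finset.subset_erase.2 ⟨hseq ▸ hG, hv⟩).trans hsub)
  refine ⟨{yv d (tauK d n), yv d (tauK d n + j)}, ?_, fun G => ⟨?_, ?_⟩⟩
  · rw [Finset.insert_subset_iff, Finset.singleton_subset_iff]
    exact ⟨hk, hkj⟩
  · rintro ⟨hG, hnew⟩
    rw [Finset.insert_subset_iff, Finset.singleton_subset_iff]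
    exact ⟨⟨mem_of_erase G hnew hG _ _ (tau_erase_yv_subset_succ j _),
      mem_of_erase G hnew hG _ _ (tau_erase_yv_subset j _)⟩, hG⟩
  · rintro ⟨hr, hG⟩
    refine ⟨hG, fun l hl hGl => ?_⟩
    have := eq_of_yv_mem_tauSeq hi hn (tauJ_mono hl.le) hj
      (hGl (hr (by simp))) (hGl (hr (by simp)))
    omega

lemma eq_tauSeq {i : ℕ} {F : ℕ → Finset (Vtx d)} (hF0 : F 0 = tau d 0 1)
    (hFjk : ∀ j k, 1 ≤ j → j ≤ i → 1 ≤ k → k ≤ d → F ((j - 1) * d + k) = tau d j k)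
    {n : ℕ} (hn : n ≤ i * d) : F n = tauSeq d n := by
  rcases Nat.eq_zero_or_pos n with rfl | hn0
  · rw [hF0, tauSeq, tauJ_zero, tau_zero]
  obtain ⟨j, hj⟩ := exists_tauJ_eq_add_one (d := d) hn0.ne'
  have hji := tauJ_le_iff.2 hn
  have hidx : (j + 1 - 1) * d + tauK d n = n := by
    have := mul_tauJ_add_tauK (d := d) n
    rw [hj, mul_add_one] at this
    rw [add_tsub_cancel_right, mul_comm]
    omega
  rw [← hidx, hFjk _ _ (by omega) (by omega) (one_le_tauK n) (tauK_le n), hidx, tauSeq, hj]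

end Index

/-- For `d ≥ 3` and `0 ≤ i` with `2i ≤ d+1`, the complex `⋃_{k=0}^{i} Γ_k`
is shellable; in fact the ordering `τ_0, τ_1^1, …, τ_1^d, τ_2^1, …, τ_2^d, …, τ_i^1, …, τ_i^d`
of its facets (by increasing `j`, then increasing `k`) is a shelling order.
The enumeration is encoded by `F : ℕ → Finset (Vtx d)` with `F 0 = τ_0` and
`F ((j-1)d + k) = τ_j^k`. -/
theorem statement1 (d i : ℕ) (hd : 3 ≤ d) (hi : 2 * i ≤ d + 1)
    (F : ℕ → Finset (Vtx d))
    (hF0 : F 0 = tau d 0 1)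
    (hFjk : ∀ j k, 1 ≤ j → j ≤ i → 1 ≤ k → k ≤ d → F ((j - 1) * d + k) = tau d j k) :
    -- the listed facets generate exactly the complex `⋃_{k=0}^{i} Γ_k`,
    (({G | ∃ k ≤ i, G ∈ Gamma d k} : Set (Finset (Vtx d))) =
        {G | ∃ n ≤ i * d, G ⊆ F n}) ∧
    -- they are listed without repetition,
    (∀ a b, a ≤ i * d → b ≤ i * d → F a = F b → a = b) ∧
    -- and the listed ordering satisfies the shelling condition.
    (∀ n, 1 ≤ n → n ≤ i * d →
      ∃ r : Finset (Vtx d), r ⊆ F n ∧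
        ∀ G : Finset (Vtx d),
          (G ⊆ F n ∧ ∀ l < n, ¬ G ⊆ F l) ↔ (r ⊆ G ∧ G ⊆ F n)) := by
  have : NeZero d := ⟨by omega⟩
  have hF : ∀ n ≤ i * d, F n = tauSeq d n := fun n hn => eq_tauSeq hF0 hFjk hn
  refine ⟨?_, fun a b ha hb hab => tauSeq_injOn hi ha hb (by rwa [← hF a ha, ← hF b hb]),
    fun n hn1 hn => ?_⟩
  · rw [tauSeq_generates]
    ext G
    exact exists_congr fun n => and_congr_right fun hn => by rw [hF n hn]
  · obtain ⟨r, hr, hshell⟩ := tauSeq_shelling hi hn1 hn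
    refine ⟨r, hF n hn ▸ hr, fun G => ?_⟩
    have hearlier : (∀ l < n, ¬ G ⊆ F l) ↔ ∀ l < n, ¬ G ⊆ tauSeq d l :=
      forall₂_congr fun l hl => by rw [hF l (by omega)]
    rw [hF n hn, hearlier]
    exact hshell G

end SpherePaper
end

section
/- Let d = 2m be even with d ≥ 4, let γ be the complex generated by {τ_{m−1}^k : 1 ≤ k ≤ m} and −γ the complex generated by {τ_{m+1}^k : m ≤ k ≤ d−1}. Then there exists a bijection φ : V_d → V_d with φ ∘ α = α ∘ φ that maps the 2d facets of B(1,d) bijectively onto the facets of Γ_m ∪ γ ∪ (−γ); in particular, Γ_m ∪ γ ∪ (−γ) is simplicially isomorphic to B(1,d). -/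
/-!
The map `φ` sends `x_{2i+1} ↦ x_i` and `x_{2i+2} ↦ y_{m+i}` (indices mod `2m`): it interleaves
the two halves of the cycle and flips the sign at even positions. A facet of the cross-polytope is
the graph of a sign function on `ℤ/2m`, and `φ` acts on graphs as a signed permutation, so `φ σ_n`
is again a graph whose sign function can be computed: `φ σ_{2i} = τ_m^i`, `φ σ_{2i-1} = τ_{m-1}^i`
for `i ≤ m` and `φ σ_{2i+1} = τ_{m+1}^i` for `i ≥ m`. These are exactly the generators of
`Γ_m ∪ γ ∪ (-γ)`; all of them have `2m` vertices, so they are its facets, and faces correspond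
because `φ` is a bijection.
-/

namespace SpherePaper

open Finset

section SignGraph

variable {ι : Type*} [Fintype ι]

def signedMap (π : ι → ι) (ε : ι → Bool) (v : ι × Bool) : ι × Bool :=
  (π v.1, xor v.2 (ε v.1))

lemma signedMap_bijective {π : ι → ι} (hπ : Function.Bijective π) (ε : ι → Bool) :
    Function.Bijective (signedMap π ε) := by
  refine Finite.injective_iff_bijective.mp fun ⟨r, b⟩ ⟨r', b'⟩ h => ?_
  simp only [signedMap, Prod.mk.injEq] at h
  obtain ⟨hr, hb⟩ := h
  obtain rfl := hπ.1 hr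
  simpa using hb

variable [DecidableEq ι]

def signGraph (c : ι → Bool) : Finset (ι × Bool) :=
  univ.image fun r => (r, c r)

lemma mem_signGraph {c : ι → Bool} {v : ι × Bool} : v ∈ signGraph c ↔ v.2 = c v.1 := by
  obtain ⟨r, b⟩ := v
  simp [signGraph, eq_comm]

lemma card_signGraph (c : ι → Bool) : (signGraph c).card = Fintype.card ι :=
  card_image_of_injective _ fun _ _ h => congrArg Prod.fst h

lemma image_signGraph_eq {π : ι → ι} (hπ : Function.Bijective π) {ε c c' : ι → Bool}
    (h : ∀ r, c' (π r) = xor (c r) (ε r)) :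
    (signGraph c).image (signedMap π ε) = signGraph c' := by
  ext ⟨q, b⟩
  obtain ⟨r, rfl⟩ := hπ.2 q
  simp only [mem_image, mem_signGraph, signedMap, h, Prod.mk.injEq, Prod.exists, hπ.1.eq_iff]
  constructor
  · rintro ⟨_, _, hb, rfl, rfl⟩
    simp [hb]
  · rintro rfl
    exact ⟨r, _, rfl, rfl, by simp⟩

end SignGraph

lemma isFacetOf_iff_of_card_eq {α ι : Type*} {P : ι → Prop} {T : ι → Finset α} {n : ℕ}
    (hT : ∀ i, P i → (T i).card = n) (F : Finset α) :
    IsFacetOf {G | ∃ i, P i ∧ G ⊆ T i} F ↔ ∃ i, P i ∧ F = T i := by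
  constructor
  · rintro ⟨⟨i, hi, hF⟩, hmax⟩
    exact ⟨i, hi, hmax _ ⟨i, hi, subset_rfl⟩ hF⟩
  · rintro ⟨i, hi, rfl⟩
    refine ⟨⟨i, hi, subset_rfl⟩, fun G ⟨i', hi', hG⟩ hsub => ?_⟩
    have := eq_of_subset_of_card_le (hsub.trans hG) (by rw [hT i hi, hT i' hi'])
    exact hsub.antisymm (this ▸ hG)

lemma ZMod.val_natCast_sub_natCast {d a k : ℕ} [NeZero d] (ha : a < d) (hk : k ≤ d) :
    ((a : ZMod d) - k).val = if a < k then a + d - k else a - k := by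
  split_ifs with h
  · rw [show ((a : ZMod d) - k) = ((a + d - k : ℕ) : ZMod d) by
      rw [Nat.cast_sub (by omega)]; simp, ZMod.val_natCast_of_lt (by omega)]
  · rw [← Nat.cast_sub (by omega), ZMod.val_natCast_of_lt (by omega)]

section CrossPolytopeFacets

variable {d : ℕ} [NeZero d]

lemma image_range_eq_signGraph (f : ℕ → Bool) (k : ℕ) :
    (range d).image (fun t => (((k + t : ℕ) : ZMod d), f t)) =
      signGraph fun r : ZMod d => f (r - k).val := by
  ext ⟨r, b⟩
  simp only [mem_image, mem_range, mem_signGraph, Prod.mk.injEq]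
  constructor
  · rintro ⟨t, ht, rfl, rfl⟩
    simp [ZMod.val_natCast_of_lt ht]
  · rintro rfl
    refine ⟨(r - k).val, ZMod.val_lt _, by simp, rfl⟩

lemma tau_eq_signGraph (j k : ℕ) :
    tau d j k = signGraph fun r : ZMod d => decide ((r - k).val < j) :=
  image_range_eq_signGraph _ k

lemma sigB_eq_signGraph {n : ℕ} (hn1 : 1 ≤ n) (hn2 : n ≤ 2 * d) :
    sigB d n = signGraph fun r : ZMod d =>
      if n ≤ d then decide (n ≤ (r - 1).val) else decide ((r - 1).val < n - d) := by
  have hmod : (n - 1) % (2 * d) = n - 1 := Nat.mod_eq_of_lt (by omega)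
  rw [sigB, hmod, Nat.sub_add_cancel hn1]
  simp_rw [add_comm _ 1]
  split_ifs with h
  · convert image_range_eq_signGraph (fun t => decide (n ≤ t)) 1 using 3
    · simp only [Prod.mk.injEq, decide_eq_decide, true_and]; omega
    · simp
  · convert image_range_eq_signGraph (fun t => decide (t < n - d)) 1 using 3
    · simp only [Prod.mk.injEq, decide_eq_decide, true_and]; omega
    · simp

lemma card_tau (j k : ℕ) : (tau d j k).card = d := by
  rw [tau_eq_signGraph, card_signGraph, ZMod.card]

end CrossPolytopeFacets

section Phi

variable (m : ℕ)

def phiIdx (s : ℕ) : ℕ :=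
  if s % 2 = 0 then s / 2 else s / 2 + m

def phiPerm (r : ZMod (2 * m)) : ZMod (2 * m) :=
  phiIdx m (r - 1).val

def phi : Vtx (2 * m) → Vtx (2 * m) :=
  signedMap (phiPerm m) fun r => decide ((r - 1).val % 2 = 1)

variable {m}

lemma phiIdx_lt {s : ℕ} (hs : s < 2 * m) : phiIdx m s < 2 * m := by
  unfold phiIdx; split_ifs <;> omega

lemma phiIdx_injOn {s t : ℕ} (hs : s < 2 * m) (ht : t < 2 * m) (h : phiIdx m s = phiIdx m t) :
    s = t := by
  unfold phiIdx at h; split_ifs at h <;> omega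

lemma phi_comp_alphaV : phi m ∘ alphaV (2 * m) = alphaV (2 * m) ∘ phi m := by
  funext ⟨r, b⟩
  simp only [Function.comp_apply, phi, signedMap, alphaV, Bool.not_xor]
  rfl

variable [NeZero m]

lemma phiPerm_injective : Function.Injective (phiPerm m) := by
  intro r r' h
  have hr := ZMod.val_lt (r - 1)
  have hr' := ZMod.val_lt (r' - 1)
  have := congrArg ZMod.val h
  rw [phiPerm, phiPerm, ZMod.val_natCast_of_lt (phiIdx_lt hr),
    ZMod.val_natCast_of_lt (phiIdx_lt hr')] at this
  simpa using ZMod.val_injective _ (phiIdx_injOn hr hr' this)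

lemma phiPerm_bijective : Function.Bijective (phiPerm m) :=
  Finite.injective_iff_bijective.mp phiPerm_injective

lemma phi_bijective : Function.Bijective (phi m) :=
  signedMap_bijective phiPerm_bijective _

/-- For the vertex position `r = s + 1`, the `if` on the left of `h` is `(phiPerm m r - k) mod 2m`
and the one on the right is the sign of `r` in `σ_n`. -/
lemma image_sigB_eq_tau {n j k : ℕ} (hn1 : 1 ≤ n) (hn2 : n ≤ 2 * (2 * m)) (hk : k ≤ 2 * m)
    (h : ∀ s < 2 * m, ((if phiIdx m s < k then phiIdx m s + 2 * m - k else phiIdx m s - k) < j ↔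
      ((if n ≤ 2 * m then n ≤ s else s < n - 2 * m) ↔ s % 2 = 0))) :
    (sigB (2 * m) n).image (phi m) = tau (2 * m) j k := by
  rw [sigB_eq_signGraph (d := 2 * m) hn1 hn2, tau_eq_signGraph (d := 2 * m)]
  refine image_signGraph_eq phiPerm_bijective fun r => ?_
  have hs := ZMod.val_lt (r - 1)
  specialize h _ hs
  rw [phiPerm, ZMod.val_natCast_sub_natCast (d := 2 * m) (phiIdx_lt hs) hk]
  grind

end Phi

section Correspondence

variable {m : ℕ}

def IsFacetIndex (m : ℕ) (p : ℕ × ℕ) : Prop :=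
  (p.1 = m ∧ 1 ≤ p.2 ∧ p.2 ≤ 2 * m) ∨ (p.1 = m - 1 ∧ 1 ≤ p.2 ∧ p.2 ≤ m) ∨
    (p.1 = m + 1 ∧ m ≤ p.2 ∧ p.2 ≤ 2 * m - 1)

def tauIndex (m n : ℕ) : ℕ × ℕ :=
  if n % 2 = 0 then (m, n / 2) else if n ≤ 2 * m then (m - 1, (n + 1) / 2) else (m + 1, (n - 1) / 2)

lemma union_eq_setOf_isFacetIndex :
    Gamma (2 * m) m ∪
        {F | ∃ k, 1 ≤ k ∧ k ≤ m ∧ F ⊆ tau (2 * m) (m - 1) k} ∪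
        {F | ∃ k, m ≤ k ∧ k ≤ 2 * m - 1 ∧ F ⊆ tau (2 * m) (m + 1) k} =
      {F | ∃ p, IsFacetIndex m p ∧ F ⊆ tau (2 * m) p.1 p.2} := by
  ext F
  simp only [Gamma, IsFacetIndex, Set.mem_union, Set.mem_ofPred_eq, Prod.exists]
  constructor
  · rintro ((⟨k, hk⟩ | ⟨k, hk⟩) | ⟨k, hk⟩)
    exacts [⟨m, k, by grind⟩, ⟨m - 1, k, by grind⟩, ⟨m + 1, k, by grind⟩]
  · rintro ⟨j, k, (⟨rfl, hk⟩ | ⟨rfl, hk⟩ | ⟨rfl, hk⟩), hF⟩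
    exacts [.inl (.inl ⟨k, hk.1, hk.2, hF⟩), .inl (.inr ⟨k, hk.1, hk.2, hF⟩),
      .inr ⟨k, hk.1, hk.2, hF⟩]

lemma isFacetIndex_tauIndex {n : ℕ} (hn1 : 1 ≤ n) (hn2 : n ≤ 2 * (2 * m)) :
    IsFacetIndex m (tauIndex m n) := by
  unfold IsFacetIndex tauIndex
  split_ifs <;> omega

lemma exists_tauIndex_eq {p : ℕ × ℕ} (hm : 1 ≤ m) (hp : IsFacetIndex m p) :
    ∃ n, 1 ≤ n ∧ n ≤ 2 * (2 * m) ∧ tauIndex m n = p := by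
  obtain ⟨j, k⟩ := p
  simp only [IsFacetIndex] at hp
  rcases hp with ⟨rfl, hk⟩ | ⟨rfl, hk⟩ | ⟨rfl, hk⟩
  exacts [⟨2 * k, by omega, by omega, by grind [tauIndex]⟩,
    ⟨2 * k - 1, by omega, by omega, by grind [tauIndex]⟩,
    ⟨2 * k + 1, by omega, by omega, by grind [tauIndex]⟩]

variable [NeZero m]

lemma image_sigB_phi {n : ℕ} (hn1 : 1 ≤ n) (hn2 : n ≤ 2 * (2 * m)) :
    (sigB (2 * m) n).image (phi m) = tau (2 * m) (tauIndex m n).1 (tauIndex m n).2 := by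
  unfold tauIndex
  split_ifs <;> refine image_sigB_eq_tau hn1 hn2 (by omega) fun s hs => ?_ <;>
    unfold phiIdx <;> split_ifs <;> omega

lemma exists_image_sigB_iff (R : Finset (Vtx (2 * m)) → Finset (Vtx (2 * m)) → Prop)
    (hm : 1 ≤ m) (F : Finset (Vtx (2 * m))) :
    (∃ n, 1 ≤ n ∧ n ≤ 2 * (2 * m) ∧ R F ((sigB (2 * m) n).image (phi m))) ↔
      ∃ p, IsFacetIndex m p ∧ R F (tau (2 * m) p.1 p.2) := by
  constructor
  · rintro ⟨n, hn1, hn2, hF⟩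
    exact ⟨tauIndex m n, isFacetIndex_tauIndex hn1 hn2, image_sigB_phi hn1 hn2 ▸ hF⟩
  · rintro ⟨p, hp, hF⟩
    obtain ⟨n, hn1, hn2, rfl⟩ := exists_tauIndex_eq hm hp
    exact ⟨n, hn1, hn2, (image_sigB_phi hn1 hn2).symm ▸ hF⟩

end Correspondence

/-- Let `d = 2m` be even, `d ≥ 4`; let `γ` be generated by `τ_{m-1}^k`
(`1 ≤ k ≤ m`) and `-γ` by `τ_{m+1}^k` (`m ≤ k ≤ d-1`). Then there is a bijection `φ` of the
vertex set commuting with `α` that maps the `2d` facets of `B(1,d)` bijectively onto the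
facets of `Γ_m ∪ γ ∪ (-γ)`; in particular, `Γ_m ∪ γ ∪ (-γ)` is simplicially isomorphic to
`B(1,d)`. -/
theorem statement7 (m : ℕ) (hm : 2 ≤ m) :
    ∃ φ : Vtx (2 * m) → Vtx (2 * m), Function.Bijective φ ∧
      φ ∘ alphaV (2 * m) = alphaV (2 * m) ∘ φ ∧
      (∀ F : Finset (Vtx (2 * m)),
        (∃ n, 1 ≤ n ∧ n ≤ 2 * (2 * m) ∧ F = (sigB (2 * m) n).image φ) ↔
          IsFacetOf (Gamma (2 * m) m ∪
            {F | ∃ k, 1 ≤ k ∧ k ≤ m ∧ F ⊆ tau (2 * m) (m - 1) k} ∪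
            {F | ∃ k, m ≤ k ∧ k ≤ 2 * m - 1 ∧ F ⊆ tau (2 * m) (m + 1) k}) F) ∧
      (∀ G : Finset (Vtx (2 * m)),
        (∃ F : Finset (Vtx (2 * m)),
            (∃ n, 1 ≤ n ∧ n ≤ 2 * (2 * m) ∧ F ⊆ sigB (2 * m) n) ∧
            G = F.image φ) ↔
          G ∈ Gamma (2 * m) m ∪
            {F | ∃ k, 1 ≤ k ∧ k ≤ m ∧ F ⊆ tau (2 * m) (m - 1) k} ∪
            {F | ∃ k, m ≤ k ∧ k ≤ 2 * m - 1 ∧ F ⊆ tau (2 * m) (m + 1) k}) := by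
  have : NeZero m := ⟨by omega⟩
  refine ⟨phi m, phi_bijective, phi_comp_alphaV, fun F => ?_, fun G => ?_⟩
  · rw [union_eq_setOf_isFacetIndex, isFacetOf_iff_of_card_eq (fun _ _ => card_tau _ _),
      exists_image_sigB_iff (· = ·) (by omega)]
  · rw [union_eq_setOf_isFacetIndex, Set.mem_ofPred_eq,
      ← exists_image_sigB_iff (· ⊆ ·) (by omega)]
    constructor
    · rintro ⟨F, ⟨n, hn1, hn2, hF⟩, rfl⟩
      exact ⟨n, hn1, hn2, image_subset_image hF⟩
    · rintro ⟨n, hn1, hn2, hG⟩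
      obtain ⟨F, hF, rfl⟩ := subset_image_iff.mp hG
      exact ⟨F, ⟨n, hn1, hn2, hF⟩, rfl⟩

end SpherePaper
end
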